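/- arXiv:2409.07007 — 6 statements merged into one kernel-verified Lean document; each statement's English description precedes it below -/
import Mathlib

section
/- Let A ∈ ℂ^{m×n×p}, W ∈ ℂ^{n×m×p}, with rank_M(A) = rp and rank_M(W) = sp where sp ≤ rp. Suppose W = B *_M C is a full-rank decomposition, i.e., B ∈ ℂ^{n×s×p}, C ∈ ℂ^{s×m×p} and rank_M(B) = rank_M(C) = sp, and suppose there exists an outer inverse X of A with R_M(X) = R_M(W) and N_M(X) = N_M(W). Then the tensor C *_M A *_M B ∈ ℂ^{s×s×p} is invertible, X = B *_M (C *_M A *_M B)^{-1} *_M C, and moreover R_M(X) = R_M(B) and N_M(X) = N_M(C). -/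
open Matrix Finset

/-- A third-order tensor in `ℂ^{m×n×p}`, given by its `p` frontal slices. -/
abbrev Tensor (m n p : ℕ) := Fin p → Matrix (Fin m) (Fin n) ℂ

/-- The transform `Â = A ×₃ M` (mode-3 product with `M`). -/
noncomputable def hatT {m n p : ℕ} (M : Matrix (Fin p) (Fin p) ℂ) (A : Tensor m n p) :
    Tensor m n p :=
  fun l => ∑ s, M l s • A s

/-- `mat(A)`: the block-diagonal matrix whose blocks are frontal slices of `A ×₃ M`. -/
noncomputable def matT {m n p : ℕ} (M : Matrix (Fin p) (Fin p) ℂ) (A : Tensor m n p) :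
    Matrix (Fin m × Fin p) (Fin n × Fin p) ℂ :=
  Matrix.blockDiagonal (hatT M A)

/-- The M-product `A *_M B`, determined by `mat(A *_M B) = mat(A)·mat(B)`. -/
noncomputable def mprod {m n k p : ℕ} (M : Matrix (Fin p) (Fin p) ℂ)
    (A : Tensor m n p) (B : Tensor n k p) : Tensor m k p :=
  fun l => ∑ s, M⁻¹ l s • (hatT M A s * hatT M B s)

/-- The conjugate transpose `A^*`, determined by `mat(A^*) = mat(A)^*`. -/
noncomputable def mstar {m n p : ℕ} (M : Matrix (Fin p) (Fin p) ℂ) (A : Tensor m n p) :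
    Tensor n m p :=
  fun l => ∑ s, M⁻¹ l s • (hatT M A s)ᴴ

/-- The identity tensor `I_M ∈ ℂ^{m×m×p}`, determined by `mat(I_M) = I`. -/
noncomputable def idT {p : ℕ} (M : Matrix (Fin p) (Fin p) ℂ) (m : ℕ) : Tensor m m p :=
  fun l => ∑ s, M⁻¹ l s • (1 : Matrix (Fin m) (Fin m) ℂ)

/-- M-product powers of a square tensor. -/
noncomputable def mpow {m p : ℕ} (M : Matrix (Fin p) (Fin p) ℂ) (A : Tensor m m p) :
    ℕ → Tensor m m p
  | 0 => idT M m
  | k + 1 => mprod M A (mpow M A k)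

/-- `R_M(A)`: the column space of `mat(A)`. -/
noncomputable def rangeM {m n p : ℕ} (M : Matrix (Fin p) (Fin p) ℂ) (A : Tensor m n p) :
    Submodule ℂ (Fin m × Fin p → ℂ) :=
  LinearMap.range (matT M A).mulVecLin

/-- `N_M(A)`: the kernel of `mat(A)`. -/
noncomputable def kerM {m n p : ℕ} (M : Matrix (Fin p) (Fin p) ℂ) (A : Tensor m n p) :
    Submodule ℂ (Fin n × Fin p → ℂ) :=
  LinearMap.ker (matT M A).mulVecLin

/-- `rank_M(A) = rank(mat(A))`. -/
noncomputable def rankM {m n p : ℕ} (M : Matrix (Fin p) (Fin p) ℂ) (A : Tensor m n p) : ℕ :=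
  (matT M A).rank

/-- The first `s` lateral slices `Q(:,1:s,:)`. -/
def latSlice {n s p : ℕ} (hsn : s ≤ n) (Q : Tensor n n p) : Tensor n s p :=
  fun l => (Q l).submatrix id (Fin.castLE hsn)

/-- The first `s` horizontal slices `R(1:s,:,:)`. -/
def horSlice {n m s p : ℕ} (hsn : s ≤ n) (R : Tensor n m p) : Tensor s m p :=
  fun l => (R l).submatrix (Fin.castLE hsn) id

/-- Frobenius norm of a complex matrix. -/
noncomputable def frobNorm {α β : Type*} [Fintype α] [Fintype β] (X : Matrix α β ℂ) : ℝ :=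
  Real.sqrt (∑ i, ∑ j, ‖X i j‖ ^ 2)

/-! Everything is transported to the block-diagonal matrices `mat(·)`, on which `mat` is an
injective ring map. There `b = mat B` has a left inverse `b'` and `c = mat C` a right inverse
`c'`, so the range and kernel conditions give `x = b u c` with `u = b' x c'`. The square matrix
`u` is invertible since `rank u ≥ rank x = rank b`, and cancelling `b` and `c` in `x a x = x`
leaves `u (c a b) u = u`, i.e. `c a b = u⁻¹`. Finally the inverse of the block-diagonal matrix
`mat (C * A * B)` is block-diagonal, hence of the form `mat Y`. -/

open Module LinearMap

namespace Matrix

variable {𝕜 : Type*} [Field 𝕜] {ι κ ν : Type*}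

lemma ker_mulVecLin_eq_bot_of_rank_eq_card [Fintype ν] {b : Matrix κ ν 𝕜}
    (hb : b.rank = Fintype.card ν) : ker b.mulVecLin = ⊥ := by
  have h := finrank_range_add_finrank_ker b.mulVecLin
  rw [finrank_pi, ← rank, hb] at h
  exact Submodule.finrank_eq_zero.mp (by omega)

lemma range_mulVecLin_eq_top_of_rank_eq_card [Fintype ι] [Fintype ν] {c : Matrix ν ι 𝕜}
    (hc : c.rank = Fintype.card ν) : range c.mulVecLin = ⊤ :=
  Submodule.eq_top_of_finrank_eq (by rw [← rank, hc, finrank_pi])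

lemma isUnit_of_rank_eq_card [Fintype ν] [DecidableEq ν] {u : Matrix ν ν 𝕜}
    (hu : u.rank = Fintype.card ν) : IsUnit u :=
  mulVec_surjective_iff_isUnit.mp <| range_eq_top.mp (range_mulVecLin_eq_top_of_rank_eq_card hu)

lemma rank_eq_card_of_ker_mulVecLin_eq_bot [Fintype ν] {b : Matrix κ ν 𝕜}
    (hb : ker b.mulVecLin = ⊥) : b.rank = Fintype.card ν := by
  rw [rank, finrank_range_of_inj (ker_eq_bot.mp hb), finrank_pi]

lemma exists_mul_eq_one_of_ker_mulVecLin_eq_bot [Fintype κ] [DecidableEq κ] [Fintype ν]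
    [DecidableEq ν] {b : Matrix κ ν 𝕜} (hb : ker b.mulVecLin = ⊥) :
    ∃ b' : Matrix ν κ 𝕜, b' * b = 1 := by
  obtain ⟨g, hg⟩ := b.mulVecLin.exists_leftInverse_of_injective hb
  refine ⟨toMatrix' g, ?_⟩
  rw [← toMatrix'_toLin' b, ← toMatrix'_comp, toLin'_apply', hg, toMatrix'_id]

lemma exists_mul_eq_one_of_range_mulVecLin_eq_top [Fintype ι] [DecidableEq ι] [Fintype ν]
    [DecidableEq ν] {c : Matrix ν ι 𝕜} (hc : range c.mulVecLin = ⊤) :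
    ∃ c' : Matrix ι ν 𝕜, c * c' = 1 := by
  obtain ⟨g, hg⟩ := c.mulVecLin.exists_rightInverse_of_surjective hc
  refine ⟨toMatrix' g, ?_⟩
  rw [← toMatrix'_toLin' c, ← toMatrix'_comp, toLin'_apply', hg, toMatrix'_id]

lemma range_mulVecLin_mul_of_range_eq_top [Fintype ι] [Fintype ν] (b : Matrix κ ν 𝕜)
    {c : Matrix ν ι 𝕜} (hc : range c.mulVecLin = ⊤) :
    range (b * c).mulVecLin = range b.mulVecLin := by
  rw [mulVecLin_mul, range_comp, hc, Submodule.map_top]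

lemma ker_mulVecLin_mul_of_ker_eq_bot [Fintype ι] [Fintype ν] {b : Matrix κ ν 𝕜}
    (hb : ker b.mulVecLin = ⊥) (c : Matrix ν ι 𝕜) :
    ker (b * c).mulVecLin = ker c.mulVecLin := by
  rw [mulVecLin_mul]
  exact ker_comp_of_ker_eq_bot _ hb

lemma mul_mul_eq_of_range_le [Fintype κ] [Fintype ν] [DecidableEq ν] [Fintype ι]
    [DecidableEq ι] {b : Matrix κ ν 𝕜} {b' : Matrix ν κ 𝕜} (hb' : b' * b = 1)
    {x : Matrix κ ι 𝕜} (hx : range x.mulVecLin ≤ range b.mulVecLin) : b * b' * x = x := by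
  refine ext_of_mulVec_single fun i => ?_
  obtain ⟨v, hv⟩ := hx ⟨Pi.single i 1, rfl⟩
  simp only [mulVecLin_apply] at hv
  rw [← mulVec_mulVec, ← mulVec_mulVec, ← hv, mulVec_mulVec v b' b, hb', one_mulVec]

lemma mul_mul_eq_of_ker_le [Fintype ν] [DecidableEq ν] [Fintype ι] [DecidableEq ι]
    {c : Matrix ν ι 𝕜} {c' : Matrix ι ν 𝕜} (hc' : c * c' = 1) {x : Matrix κ ι 𝕜}
    (hx : ker c.mulVecLin ≤ ker x.mulVecLin) : x * c' * c = x := by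
  refine ext_of_mulVec_single fun i => ?_
  have hv : Pi.single i 1 - c' *ᵥ c *ᵥ Pi.single i (1 : 𝕜) ∈ ker c.mulVecLin := by
    rw [mem_ker, mulVecLin_apply, mulVec_sub, mulVec_mulVec, hc', one_mulVec, sub_self]
  have hxv := hx hv
  rw [mem_ker, mulVecLin_apply, mulVec_sub, sub_eq_zero] at hxv
  rw [← mulVec_mulVec, ← mulVec_mulVec, hxv]

lemma mul_mul_mul_cancel [Fintype κ] [Fintype ν] [DecidableEq ν] [Fintype ι]
    {b : Matrix κ ν 𝕜} {b' : Matrix ν κ 𝕜} (hb' : b' * b = 1)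
    {c : Matrix ν ι 𝕜} {c' : Matrix ι ν 𝕜} (hc' : c * c' = 1) (y : Matrix ν ν 𝕜) :
    b' * (b * y * c) * c' = y := by
  simp only [← Matrix.mul_assoc, hb', Matrix.one_mul]
  rw [Matrix.mul_assoc, hc', Matrix.mul_one]

theorem isUnit_mul_mul_and_eq_of_outer_inverse [Fintype ι] [DecidableEq ι] [Fintype κ]
    [DecidableEq κ] [Fintype ν] [DecidableEq ν]
    {a : Matrix ι κ 𝕜} {x : Matrix κ ι 𝕜} {b : Matrix κ ν 𝕜} {c : Matrix ν ι 𝕜}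
    (hb : ker b.mulVecLin = ⊥) (hc : range c.mulVecLin = ⊤) (hx : x * a * x = x)
    (hR : range x.mulVecLin = range b.mulVecLin) (hN : ker x.mulVecLin = ker c.mulVecLin) :
    IsUnit (c * a * b) ∧ x = b * (c * a * b)⁻¹ * c := by
  obtain ⟨b', hb'⟩ := exists_mul_eq_one_of_ker_mulVecLin_eq_bot hb
  obtain ⟨c', hc'⟩ := exists_mul_eq_one_of_range_mulVecLin_eq_top hc
  set u := b' * x * c'
  have hxu : x = b * u * c := by
    calc x = b * b' * x * c' * c := by
          rw [mul_mul_eq_of_range_le hb' hR.le, mul_mul_eq_of_ker_le hc' hN.ge]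
      _ = b * u * c := by simp only [u, Matrix.mul_assoc]
  have hu : IsUnit u := by
    refine isUnit_of_rank_eq_card (le_antisymm (rank_le_card_width u) ?_)
    calc Fintype.card ν = x.rank := by
          rw [rank, hR, ← rank, rank_eq_card_of_ker_mulVecLin_eq_bot hb]
      _ = (b * u * c).rank := by rw [← hxu]
      _ ≤ u.rank := (rank_mul_le_left _ _).trans (rank_mul_le_right _ _)
  have huu : u * (c * a * b) * u = u := by
    calc u * (c * a * b) * u = b' * (b * (u * (c * a * b) * u) * c) * c' :=
          (mul_mul_mul_cancel hb' hc' _).symm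
      _ = b' * (x * a * x) * c' := by rw [hxu]; simp only [Matrix.mul_assoc]
      _ = u := by rw [hx]
  have hright : c * a * b * u = 1 :=
    hu.mul_left_cancel (by rw [← Matrix.mul_assoc, huu, Matrix.mul_one])
  have hleft : u * (c * a * b) = 1 := hu.mul_right_cancel (by rw [huu, Matrix.one_mul])
  exact ⟨⟨⟨_, u, hright, hleft⟩, rfl⟩, by rw [inv_eq_right_inv hright, hxu]⟩

end Matrix

section Tensor

variable {m n p : ℕ} {M : Matrix (Fin p) (Fin p) ℂ}

/-- The inverse transform `G ×₃ M⁻¹`; `mprod` and `idT` are defined as such. -/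
noncomputable def invHatT (M : Matrix (Fin p) (Fin p) ℂ) (G : Tensor m n p) : Tensor m n p :=
  fun l => ∑ t, M⁻¹ l t • G t

lemma sum_smul_sum_smul (P Q : Matrix (Fin p) (Fin p) ℂ) (G : Tensor m n p) (l : Fin p) :
    ∑ s, P l s • ∑ t, Q s t • G t = ∑ t, (P * Q) l t • G t := by
  simp only [Finset.smul_sum, smul_smul, Matrix.mul_apply, Finset.sum_smul]
  exact Finset.sum_comm

lemma sum_one_apply_smul (G : Tensor m n p) (l : Fin p) :
    ∑ t, (1 : Matrix (Fin p) (Fin p) ℂ) l t • G t = G l := by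
  simp [Matrix.one_apply, ite_smul]

lemma hatT_invHatT (hM : IsUnit M.det) (G : Tensor m n p) : hatT M (invHatT M G) = G := by
  funext l
  unfold hatT invHatT
  rw [sum_smul_sum_smul, Matrix.mul_nonsing_inv _ hM, sum_one_apply_smul]

lemma invHatT_hatT (hM : IsUnit M.det) (A : Tensor m n p) : invHatT M (hatT M A) = A := by
  funext l
  unfold hatT invHatT
  rw [sum_smul_sum_smul, Matrix.nonsing_inv_mul _ hM, sum_one_apply_smul]

lemma matT_invHatT (hM : IsUnit M.det) (G : Tensor m n p) :
    matT M (invHatT M G) = Matrix.blockDiagonal G := by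
  rw [matT, hatT_invHatT hM]

lemma matT_injective (hM : IsUnit M.det) : Function.Injective (matT M : Tensor m n p → _) :=
  fun A B h => by
    rw [← invHatT_hatT hM A, ← invHatT_hatT hM B, Matrix.blockDiagonal_injective h]

lemma matT_mprod {k : ℕ} (hM : IsUnit M.det) (A : Tensor m n p) (B : Tensor n k p) :
    matT M (mprod M A B) = matT M A * matT M B :=
  (matT_invHatT hM _).trans (Matrix.blockDiagonal_mul (hatT M A) (hatT M B))

lemma matT_idT (hM : IsUnit M.det) (s : ℕ) : matT M (idT M s) = 1 :=
  (matT_invHatT hM _).trans Matrix.blockDiagonal_one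

lemma exists_matT_eq_inv (hM : IsUnit M.det) (T : Tensor m m p) (hT : IsUnit (matT M T)) :
    ∃ Y : Tensor m m p, matT M Y = (matT M T)⁻¹ := by
  have hblocks : ∀ l, IsUnit (hatT M T l).det := by
    have hdet := (Matrix.isUnit_iff_isUnit_det _).mp hT
    rw [matT, Matrix.det_blockDiagonal, isUnit_iff_ne_zero, Finset.prod_ne_zero_iff] at hdet
    exact fun l => isUnit_iff_ne_zero.mpr (hdet l (Finset.mem_univ l))
  refine ⟨invHatT M fun l => (hatT M T l)⁻¹, (Matrix.inv_eq_right_inv ?_).symm⟩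
  rw [matT_invHatT hM, matT, ← Matrix.blockDiagonal_mul, ← Matrix.blockDiagonal_one]
  exact congrArg _ (funext fun l => Matrix.mul_nonsing_inv _ (hblocks l))

end Tensor

theorem outer_inverse_full_rank_decomposition_general {m n p s : ℕ}
    (M : Matrix (Fin p) (Fin p) ℂ) (hM : IsUnit M.det)
    (A : Tensor m n p) (W : Tensor n m p) (B : Tensor n s p) (C : Tensor s m p)
    (hW : W = mprod M B C) (hrB : rankM M B = s * p) (hrC : rankM M C = s * p)
    (X : Tensor n m p)
    (hout : mprod M X (mprod M A X) = X)
    (hRX : rangeM M X = rangeM M W) (hNX : kerM M X = kerM M W) :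
    ∃ Y : Tensor s s p,
      mprod M (mprod M C (mprod M A B)) Y = idT M s ∧
      mprod M Y (mprod M C (mprod M A B)) = idT M s ∧
      X = mprod M B (mprod M Y C) ∧
      rangeM M X = rangeM M B ∧ kerM M X = kerM M C := by
  have hB : ker (matT M B).mulVecLin = ⊥ :=
    Matrix.ker_mulVecLin_eq_bot_of_rank_eq_card (hrB.trans (by simp))
  have hC : range (matT M C).mulVecLin = ⊤ :=
    Matrix.range_mulVecLin_eq_top_of_rank_eq_card (hrC.trans (by simp))
  have hR : rangeM M X = rangeM M B := by
    rw [hRX, hW, rangeM, matT_mprod hM, Matrix.range_mulVecLin_mul_of_range_eq_top _ hC, rangeM]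
  have hN : kerM M X = kerM M C := by
    rw [hNX, hW, kerM, matT_mprod hM, Matrix.ker_mulVecLin_mul_of_ker_eq_bot hB, kerM]
  obtain ⟨hunit, hX⟩ := Matrix.isUnit_mul_mul_and_eq_of_outer_inverse hB hC
    (by simpa only [matT_mprod hM, Matrix.mul_assoc] using congrArg (matT M) hout) hR hN
  have hdet := (Matrix.isUnit_iff_isUnit_det _).mp hunit
  obtain ⟨Y, hY⟩ := exists_matT_eq_inv hM (mprod M C (mprod M A B))
    (by rwa [matT_mprod hM, matT_mprod hM, ← Matrix.mul_assoc])
  simp only [matT_mprod hM, ← Matrix.mul_assoc] at hY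
  refine ⟨Y, matT_injective hM ?_, matT_injective hM ?_, matT_injective hM ?_, hR, hN⟩ <;>
    simp only [matT_mprod hM, matT_idT hM, ← Matrix.mul_assoc, hY]
  · exact Matrix.mul_nonsing_inv _ hdet
  · simpa only [Matrix.mul_assoc] using Matrix.nonsing_inv_mul _ hdet
  · exact hX

/-- Lemma 3.2: outer inverse via a full-rank decomposition `W = B *_M C`. -/
theorem outer_inverse_full_rank_decomposition {m n p r s : ℕ}
    (M : Matrix (Fin p) (Fin p) ℂ) (hM : IsUnit M.det)
    (A : Tensor m n p) (W : Tensor n m p) (B : Tensor n s p) (C : Tensor s m p)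
    (hrA : rankM M A = r * p) (hrW : rankM M W = s * p) (hle : s * p ≤ r * p)
    (hW : W = mprod M B C) (hrB : rankM M B = s * p) (hrC : rankM M C = s * p)
    (X : Tensor n m p)
    (hout : mprod M X (mprod M A X) = X)
    (hRX : rangeM M X = rangeM M W) (hNX : kerM M X = kerM M W) :
    ∃ Y : Tensor s s p,
      mprod M (mprod M C (mprod M A B)) Y = idT M s ∧
      mprod M Y (mprod M C (mprod M A B)) = idT M s ∧
      X = mprod M B (mprod M Y C) ∧
      rangeM M X = rangeM M B ∧ kerM M X = kerM M C :=
  outer_inverse_full_rank_decomposition_general M hM A W B C hW hrB hrC X hout hRX hNX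
end

section
/- Let A ∈ ℂ^{m×n×p} with rank_M(A) = rp, and assume A admits a Moore–Penrose inverse A†. Suppose A^* = Q̃ *_M R̃ *_M P^* is a full-rank decomposition where P ∈ ℂ^{m×m×p} satisfies P *_M P^* = I_M = P^* *_M P, Q̃ ∈ ℂ^{n×r×p} satisfies Q̃^* *_M Q̃ = I_M, and R̃ ∈ ℂ^{r×m×p} has rank_M(R̃) = rp. Then R̃ *_M P^* *_M A *_M Q̃ is invertible and Q̃ *_M (R̃ *_M P^* *_M A *_M Q̃)^{-1} *_M R̃ *_M P^* = A†. -/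
/-!
In the transform domain `*_M` is the slicewise matrix product, so everything reduces to the
frontal slices. There the decomposition reads `Â = P̂ tᴴ Q̂ᴴ` with `t` the slice of `R̃`. Since
the block-diagonal `mat(R̃)` has full row rank, `mat(R̃) mat(R̃)ᴴ` is invertible, and its
determinant is the product of those of the Gram matrices `t tᴴ`. Then `t P̂ᴴ Â Q̂ = t tᴴ`, and
`Q̂ (t tᴴ)⁻¹ t P̂ᴴ` satisfies the four Penrose equations for `Â`, so by uniqueness of the
Moore–Penrose inverse it equals `X̂`.
-/

open Matrix Finset

section Transform

variable {m n k p : ℕ}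

lemma hatT_hatT (M N : Matrix (Fin p) (Fin p) ℂ) (C : Tensor m n p) :
    hatT M (hatT N C) = hatT (M * N) C := by
  funext l
  simp only [hatT, Finset.smul_sum, smul_smul, Matrix.mul_apply, Finset.sum_smul]
  exact Finset.sum_comm

lemma hatT_one (C : Tensor m n p) : hatT 1 C = C := by
  funext l
  simp [hatT, Matrix.one_apply]

variable {M : Matrix (Fin p) (Fin p) ℂ}

lemma hatT_hatT_inv (hM : IsUnit M.det) (C : Tensor m n p) : hatT M (hatT M⁻¹ C) = C := by
  rw [hatT_hatT, Matrix.mul_nonsing_inv M hM, hatT_one]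

lemma hatT_injective (hM : IsUnit M.det) : Function.Injective (hatT (m := m) (n := n) M) :=
  fun A B h => by
    rw [← hatT_one A, ← hatT_one B, ← Matrix.nonsing_inv_mul M hM, ← hatT_hatT, ← hatT_hatT, h]

/- `mprod`, `mstar` and `idT` are, by definition, inverse transforms `hatT M⁻¹` of the
slicewise product, conjugate transpose and identity. -/
lemma hatT_mprod (hM : IsUnit M.det) (A : Tensor m n p) (B : Tensor n k p) :
    hatT M (mprod M A B) = fun s => hatT M A s * hatT M B s :=
  hatT_hatT_inv hM _

lemma hatT_mstar (hM : IsUnit M.det) (A : Tensor m n p) :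
    hatT M (mstar M A) = fun s => (hatT M A s)ᴴ :=
  hatT_hatT_inv hM _

lemma hatT_idT (hM : IsUnit M.det) : hatT M (idT M m) = fun _ => 1 :=
  hatT_hatT_inv hM _

end Transform

namespace Matrix

section MoorePenrose

variable {R : Type*} [CommRing R] [StarRing R] {l m n k : Type*}
  [Fintype l] [Fintype m] [Fintype n] [Fintype k]

structure IsMoorePenroseInverse (a : Matrix m n R) (x : Matrix n m R) : Prop where
  axa : a * x * a = a
  xax : x * a * x = x
  conjTranspose_ax : (a * x)ᴴ = a * x
  conjTranspose_xa : (x * a)ᴴ = x * a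

lemma IsMoorePenroseInverse.unique {a : Matrix m n R} {x z : Matrix n m R}
    (hx : IsMoorePenroseInverse a x) (hz : IsMoorePenroseInverse a z) : z = x := by
  have hax : a * x = a * z :=
    calc a * x = (a * z * a) * x := by rw [hz.axa]
      _ = (a * z)ᴴ * (a * x)ᴴ := by rw [hz.conjTranspose_ax, hx.conjTranspose_ax, Matrix.mul_assoc]
      _ = (a * x * a * z)ᴴ := by simp only [conjTranspose_mul, Matrix.mul_assoc]
      _ = a * z := by rw [hx.axa, hz.conjTranspose_ax]
  have hxa : x * a = z * a :=
    calc x * a = x * (a * z * a) := by rw [hz.axa]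
      _ = (x * a)ᴴ * (z * a)ᴴ := by
        rw [hz.conjTranspose_xa, hx.conjTranspose_xa]; simp only [Matrix.mul_assoc]
      _ = (z * (a * x * a))ᴴ := by simp only [conjTranspose_mul, Matrix.mul_assoc]
      _ = z * a := by rw [hx.axa, hz.conjTranspose_xa]
  calc z = z * a * z := hz.xax.symm
    _ = x * (a * z) := by rw [← hxa, Matrix.mul_assoc]
    _ = x := by rw [← hax, ← Matrix.mul_assoc, hx.xax]

variable [DecidableEq l] [DecidableEq k]

lemma mul_conjTranspose_mul_mul_eq_mul_conjTranspose {p : Matrix m k R} {t : Matrix l k R}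
    {q : Matrix n l R} (hp : pᴴ * p = 1) (hq : qᴴ * q = 1) :
    t * (pᴴ * (p * tᴴ * qᴴ * q)) = t * tᴴ :=
  calc _ = t * (pᴴ * p) * tᴴ * (qᴴ * q) := by simp only [Matrix.mul_assoc]
    _ = t * tᴴ := by rw [hp, hq, Matrix.mul_one, Matrix.mul_one]

lemma isMoorePenroseInverse_mul_conjTranspose_mul {p : Matrix m k R} {t : Matrix l k R}
    {q : Matrix n l R} (hp : pᴴ * p = 1) (hq : qᴴ * q = 1) (ht : IsUnit (t * tᴴ).det) :
    IsMoorePenroseInverse (p * tᴴ * qᴴ) (q * (t * tᴴ)⁻¹ * t * pᴴ) := by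
  have hza : q * (t * tᴴ)⁻¹ * t * pᴴ * (p * tᴴ * qᴴ) = q * qᴴ :=
    calc _ = q * ((t * tᴴ)⁻¹ * (t * (pᴴ * p) * tᴴ)) * qᴴ := by simp only [Matrix.mul_assoc]
      _ = q * qᴴ := by rw [hp, Matrix.mul_one, nonsing_inv_mul _ ht, Matrix.mul_one]
  have haz : p * tᴴ * qᴴ * (q * (t * tᴴ)⁻¹ * t * pᴴ) = p * tᴴ * (t * tᴴ)⁻¹ * t * pᴴ :=
    calc _ = p * tᴴ * (qᴴ * q) * (t * tᴴ)⁻¹ * t * pᴴ := by simp only [Matrix.mul_assoc]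
      _ = _ := by rw [hq, Matrix.mul_one]
  refine ⟨?_, ?_, ?_, ?_⟩
  · calc _ = p * tᴴ * qᴴ * (q * qᴴ) := by rw [Matrix.mul_assoc _ _ (p * tᴴ * qᴴ), hza]
      _ = p * tᴴ * (qᴴ * q) * qᴴ := by simp only [Matrix.mul_assoc]
      _ = p * tᴴ * qᴴ := by rw [hq, Matrix.mul_one]
  · calc _ = q * qᴴ * (q * (t * tᴴ)⁻¹ * t * pᴴ) := by rw [hza]
      _ = q * (qᴴ * q) * (t * tᴴ)⁻¹ * t * pᴴ := by simp only [Matrix.mul_assoc]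
      _ = q * (t * tᴴ)⁻¹ * t * pᴴ := by rw [hq, Matrix.mul_one]
  · rw [haz]
    simp only [conjTranspose_mul, conjTranspose_nonsing_inv, conjTranspose_conjTranspose,
      Matrix.mul_assoc]
  · rw [hza, conjTranspose_mul, conjTranspose_conjTranspose]

end MoorePenrose

section Rank

lemma isUnit_of_rank_eq_card_s6 {K n : Type*} [Field K] [Fintype n] [DecidableEq n]
    {A : Matrix n n K} (h : A.rank = Fintype.card n) : IsUnit A := by
  rw [← mulVec_surjective_iff_isUnit]
  exact LinearMap.range_eq_top.mp <|
    Submodule.eq_top_of_finrank_eq (h.trans (Module.finrank_fintype_fun_eq_card K).symm)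

lemma isUnit_det_mul_conjTranspose_of_rank_blockDiagonal {K ι κ o : Type*} [Field K]
    [PartialOrder K] [StarRing K] [StarOrderedRing K] [Fintype ι] [Fintype κ] [Fintype o]
    [DecidableEq ι] [DecidableEq o] {D : o → Matrix ι κ K}
    (h : (blockDiagonal D).rank = Fintype.card ι * Fintype.card o) (s : o) :
    IsUnit (D s * (D s)ᴴ).det := by
  have hunit : IsUnit (blockDiagonal D * (blockDiagonal D)ᴴ) := by
    refine isUnit_of_rank_eq_card_s6 ?_
    rw [rank_self_mul_conjTranspose, h, Fintype.card_prod]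
  rw [blockDiagonal_conjTranspose, ← blockDiagonal_mul, isUnit_iff_isUnit_det,
    det_blockDiagonal, IsUnit.prod_univ_iff] at hunit
  exact hunit s

end Rank

end Matrix

section Tensor

variable {m n p r : ℕ} {M : Matrix (Fin p) (Fin p) ℂ}

noncomputable def minv (M : Matrix (Fin p) (Fin p) ℂ) (C : Tensor m m p) : Tensor m m p :=
  hatT M⁻¹ fun s => (hatT M C s)⁻¹

lemma mprod_minv (hM : IsUnit M.det) {C : Tensor m m p} (hC : ∀ s, IsUnit (hatT M C s).det) :
    mprod M C (minv M C) = idT M m := by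
  refine hatT_injective hM (funext fun s => ?_)
  rw [hatT_mprod hM, minv, hatT_hatT_inv hM, hatT_idT hM]
  exact Matrix.mul_nonsing_inv _ (hC s)

lemma minv_mprod (hM : IsUnit M.det) {C : Tensor m m p} (hC : ∀ s, IsUnit (hatT M C s).det) :
    mprod M (minv M C) C = idT M m := by
  refine hatT_injective hM (funext fun s => ?_)
  rw [hatT_mprod hM, minv, hatT_hatT_inv hM, hatT_idT hM]
  exact Matrix.nonsing_inv_mul _ (hC s)

lemma isMoorePenroseInverse_hatT (hM : IsUnit M.det) {A : Tensor m n p} {X : Tensor n m p}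
    (h1 : mprod M A (mprod M X A) = A) (h2 : mprod M X (mprod M A X) = X)
    (h3 : mstar M (mprod M A X) = mprod M A X) (h4 : mstar M (mprod M X A) = mprod M X A)
    (s : Fin p) : Matrix.IsMoorePenroseInverse (hatT M A s) (hatT M X s) := by
  have slice {a b : ℕ} {U V : Tensor a b p} (h : U = V) : hatT M U s = hatT M V s := by rw [h]
  constructor
  · simpa only [hatT_mprod hM, Matrix.mul_assoc] using slice h1
  · simpa only [hatT_mprod hM, Matrix.mul_assoc] using slice h2
  · simpa only [hatT_mprod hM, hatT_mstar hM] using slice h3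
  · simpa only [hatT_mprod hM, hatT_mstar hM] using slice h4

open ComplexOrder in
lemma isUnit_det_hatT_mul_conjTranspose {T : Tensor r m p} (h : rankM M T = r * p) (s : Fin p) :
    IsUnit (hatT M T s * (hatT M T s)ᴴ).det :=
  Matrix.isUnit_det_mul_conjTranspose_of_rank_blockDiagonal (by simpa [rankM, matT] using h) s

end Tensor

theorem MQR_gives_moore_penrose_general {m n p r : ℕ}
    (M : Matrix (Fin p) (Fin p) ℂ) (hM : IsUnit M.det)
    (A : Tensor m n p) (X : Tensor n m p)
    (h1 : mprod M A (mprod M X A) = A)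
    (h2 : mprod M X (mprod M A X) = X)
    (h3 : mstar M (mprod M A X) = mprod M A X)
    (h4 : mstar M (mprod M X A) = mprod M X A)
    (P : Tensor m m p) (Qt : Tensor n r p) (Rt : Tensor r m p)
    (hdec : mstar M A = mprod M Qt (mprod M Rt (mstar M P)))
    (hP2 : mprod M (mstar M P) P = idT M m)
    (hQt : mprod M (mstar M Qt) Qt = idT M r)
    (hrRt : rankM M Rt = r * p) :
    ∃ Y : Tensor r r p,
      mprod M (mprod M Rt (mprod M (mstar M P) (mprod M A Qt))) Y = idT M r ∧
      mprod M Y (mprod M Rt (mprod M (mstar M P) (mprod M A Qt))) = idT M r ∧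
      mprod M Qt (mprod M Y (mprod M Rt (mstar M P))) = X := by
  have slice {a b : ℕ} {U V : Tensor a b p} (h : U = V) (s : Fin p) :
      hatT M U s = hatT M V s := by rw [h]
  have hp (s : Fin p) : (hatT M P s)ᴴ * hatT M P s = 1 := by
    simpa only [hatT_mprod hM, hatT_mstar hM, hatT_idT hM] using slice hP2 s
  have hq (s : Fin p) : (hatT M Qt s)ᴴ * hatT M Qt s = 1 := by
    simpa only [hatT_mprod hM, hatT_mstar hM, hatT_idT hM] using slice hQt s
  have hA (s : Fin p) : hatT M A s = hatT M P s * (hatT M Rt s)ᴴ * (hatT M Qt s)ᴴ := by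
    rw [← conjTranspose_conjTranspose (hatT M A s)]
    simpa only [hatT_mprod hM, hatT_mstar hM, conjTranspose_mul, conjTranspose_conjTranspose,
      Matrix.mul_assoc] using congrArg conjTranspose (slice hdec s)
  set C := mprod M Rt (mprod M (mstar M P) (mprod M A Qt))
  have hC (s : Fin p) : hatT M C s = hatT M Rt s * (hatT M Rt s)ᴴ := by
    simp only [C, hatT_mprod hM, hatT_mstar hM, hA s]
    exact Matrix.mul_conjTranspose_mul_mul_eq_mul_conjTranspose (hp s) (hq s)
  have hCunit (s : Fin p) : IsUnit (hatT M C s).det :=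
    hC s ▸ isUnit_det_hatT_mul_conjTranspose hrRt s
  refine ⟨minv M C, mprod_minv hM hCunit, minv_mprod hM hCunit,
    hatT_injective hM (funext fun s => ?_)⟩
  have hX := isMoorePenroseInverse_hatT hM h1 h2 h3 h4 s
  rw [hA s] at hX
  rw [← hX.unique (Matrix.isMoorePenroseInverse_mul_conjTranspose_mul (hp s) (hq s)
    (isUnit_det_hatT_mul_conjTranspose hrRt s))]
  simp only [hatT_mprod hM, hatT_mstar hM, minv, hatT_hatT_inv hM, hC s, Matrix.mul_assoc]

/-- Corollary 3.4 (Moore–Penrose case): the outer-inverse formula built from a full-rank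
QR-type decomposition of `A^*` yields the Moore–Penrose inverse. -/
theorem MQR_gives_moore_penrose {m n p r : ℕ}
    (M : Matrix (Fin p) (Fin p) ℂ) (hM : IsUnit M.det)
    (A : Tensor m n p) (X : Tensor n m p)
    (hrA : rankM M A = r * p)
    (h1 : mprod M A (mprod M X A) = A)
    (h2 : mprod M X (mprod M A X) = X)
    (h3 : mstar M (mprod M A X) = mprod M A X)
    (h4 : mstar M (mprod M X A) = mprod M X A)
    (P : Tensor m m p) (Qt : Tensor n r p) (Rt : Tensor r m p)
    (hdec : mstar M A = mprod M Qt (mprod M Rt (mstar M P)))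
    (hP1 : mprod M P (mstar M P) = idT M m) (hP2 : mprod M (mstar M P) P = idT M m)
    (hQt : mprod M (mstar M Qt) Qt = idT M r)
    (hrRt : rankM M Rt = r * p) :
    ∃ Y : Tensor r r p,
      mprod M (mprod M Rt (mprod M (mstar M P) (mprod M A Qt))) Y = idT M r ∧
      mprod M Y (mprod M Rt (mprod M (mstar M P) (mprod M A Qt))) = idT M r ∧
      mprod M Qt (mprod M Y (mprod M Rt (mstar M P))) = X :=
  MQR_gives_moore_penrose_general M hM A X h1 h2 h3 h4 P Qt Rt hdec hP2 hQt hrRt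
end

section
/- Let α₁ = 5(31+√93)/496, α₂ = (3+√93)/8, β₁ = 5(31−√93)/496, β₂ = (3−√93)/8, ζ₁ = 3/8, ζ₂ = 321/1984. Then for every real number x, 1 + x² + x⁴ + x⁶ + x⁸ + x¹⁰ + x¹² + x¹⁴ + x¹⁶ = (1 + α₁x² + α₂x⁴ + (1/2)x⁶ + x⁸)·(1 + β₁x² + β₂x⁴ + (1/2)x⁶ + x⁸) + ζ₁x² + ζ₂x⁴. -/
open Matrix Finset

/-- The factorization of `Λ(x) = Σ_{k=0}^{8} x^{2k}` into two degree-8 factors plus a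
correction, used in the hyperpower method of order 19. -/
theorem lambda_factorization (x : ℝ) :
    1 + x ^ 2 + x ^ 4 + x ^ 6 + x ^ 8 + x ^ 10 + x ^ 12 + x ^ 14 + x ^ 16 =
      (1 + (5 * (31 + Real.sqrt 93) / 496) * x ^ 2 + ((3 + Real.sqrt 93) / 8) * x ^ 4 +
          (1 / 2) * x ^ 6 + x ^ 8) *
        (1 + (5 * (31 - Real.sqrt 93) / 496) * x ^ 2 + ((3 - Real.sqrt 93) / 8) * x ^ 4 +
          (1 / 2) * x ^ 6 + x ^ 8) +
      (3 / 8) * x ^ 2 + (321 / 1984) * x ^ 4 := by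
  have h : Real.sqrt 93 ^ 2 = 93 := Real.sq_sqrt (by norm_num)
  linear_combination ((5/496)*x^2+(1/8)*x^4)^2 * h
end

section
/- Let α₁ = 5(31+√93)/496, α₂ = (3+√93)/8, τ₁ = (1 + √(27−2√93))/4, τ₂ = (1 − √(27−2√93))/4, τ₃ = (5√93 − 93)/496. Then for every real number x, 1 + α₁x² + α₂x⁴ + (1/2)x⁶ + x⁸ = (1 + τ₁x² + x⁴)·(1 + τ₂x² + x⁴) + τ₃x². -/
open Matrix Finset

/-- Factorization of the degree-8 factor `V(x)` in the hyperpower method of order 19. -/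
theorem V_factorization (x : ℝ) :
    1 + (5 * (31 + Real.sqrt 93) / 496) * x ^ 2 + ((3 + Real.sqrt 93) / 8) * x ^ 4 +
        (1 / 2) * x ^ 6 + x ^ 8 =
      (1 + ((1 + Real.sqrt (27 - 2 * Real.sqrt 93)) / 4) * x ^ 2 + x ^ 4) *
        (1 + ((1 - Real.sqrt (27 - 2 * Real.sqrt 93)) / 4) * x ^ 2 + x ^ 4) +
      ((5 * Real.sqrt 93 - 93) / 496) * x ^ 2 := by
  have hs : Real.sqrt 93 ^ 2 = 93 := Real.sq_sqrt (by norm_num)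
  have hle : Real.sqrt 93 ≤ 27 / 2 := by
    nlinarith [Real.sqrt_nonneg 93, hs]
  have ht : Real.sqrt (27 - 2 * Real.sqrt 93) ^ 2 = 27 - 2 * Real.sqrt 93 :=
    Real.sq_sqrt (by linarith)
  linear_combination (x ^ 4 / 16) * ht
end

section
/- Let β₁ = 5(31−√93)/496, β₂ = (3−√93)/8, τ₁ = (1 + √(27−2√93))/4, τ₂ = (1 − √(27−2√93))/4, ξ₁ = −(93 + 5√93)/496, ξ₂ = −√93/4. Then for every real number x, 1 + β₁x² + β₂x⁴ + (1/2)x⁶ + x⁸ = (1 + τ₁x² + x⁴)·(1 + τ₂x² + x⁴) + ξ₁x² + ξ₂x⁴. -/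
open Matrix Finset

/-- Factorization of the degree-8 factor `W(x)` in the hyperpower method of order 19. -/
theorem W_factorization (x : ℝ) :
    1 + (5 * (31 - Real.sqrt 93) / 496) * x ^ 2 + ((3 - Real.sqrt 93) / 8) * x ^ 4 +
        (1 / 2) * x ^ 6 + x ^ 8 =
      (1 + ((1 + Real.sqrt (27 - 2 * Real.sqrt 93)) / 4) * x ^ 2 + x ^ 4) *
        (1 + ((1 - Real.sqrt (27 - 2 * Real.sqrt 93)) / 4) * x ^ 2 + x ^ 4) +
      (-(93 + 5 * Real.sqrt 93) / 496) * x ^ 2 + (-(Real.sqrt 93) / 4) * x ^ 4 := by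
  set a := Real.sqrt 93 with ha
  set b := Real.sqrt (27 - 2 * a) with hb
  have ha2 : a ^ 2 = 93 := Real.sq_sqrt (by norm_num)
  have hale : a ≤ 10 := by nlinarith [Real.sqrt_nonneg 93, ha2]
  have hb2 : b ^ 2 = 27 - 2 * a := Real.sq_sqrt (by linarith)
  linear_combination (x ^ 4 / 16) * hb2
end

section
/- Let τ₁ = (1 + √(27−2√93))/4, τ₂ = (1 − √(27−2√93))/4, τ₃ = (5√93 − 93)/496, ξ₁ = −(93 + 5√93)/496, ξ₂ = −√93/4, ζ₁ = 3/8, ζ₂ = 321/1984. Define U(x) = (1 + τ₁x² + x⁴)·(1 + τ₂x² + x⁴), V(x) = U(x) + τ₃x², and W(x) = U(x) + ξ₁x² + ξ₂x⁴. Then for every real number x, Σ_{k=0}^{18} x^k = 1 + (x + x²)·(V(x)·W(x) + ζ₁x² + ζ₂x⁴). Consequently the factorized scheme Z_{j+1} = Z_j *_M (I + (R_j + R_j²) *_M (V(R_j) *_M W(R_j) + ζ₁R_j² + ζ₂R_j⁴)) with R_j = I − A *_M Z_j coincides with the hyperpower iteration of order 19, Z_{j+1} = Z_j *_M Σ_{k=0}^{18}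 R_j^k. -/
open Matrix Finset

noncomputable def tau1 : ℝ := (1 + Real.sqrt (27 - 2 * Real.sqrt 93)) / 4
noncomputable def tau2 : ℝ := (1 - Real.sqrt (27 - 2 * Real.sqrt 93)) / 4
noncomputable def tau3 : ℝ := (5 * Real.sqrt 93 - 93) / 496
noncomputable def xi1 : ℝ := -(93 + 5 * Real.sqrt 93) / 496
noncomputable def xi2 : ℝ := -(Real.sqrt 93) / 4

/-- `U(x) = (1 + τ₁x² + x⁴)(1 + τ₂x² + x⁴)`. -/
noncomputable def Ufn (x : ℝ) : ℝ := (1 + tau1 * x ^ 2 + x ^ 4) * (1 + tau2 * x ^ 2 + x ^ 4)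

/-- `V(x) = U(x) + τ₃x²`. -/
noncomputable def Vfn (x : ℝ) : ℝ := Ufn x + tau3 * x ^ 2

/-- `W(x) = U(x) + ξ₁x² + ξ₂x⁴`. -/
noncomputable def Wfn (x : ℝ) : ℝ := Ufn x + xi1 * x ^ 2 + xi2 * x ^ 4

/-- The scalar identity validating the factorized 19th-order hyperpower scheme:
`Σ_{k=0}^{18} x^k = 1 + (x + x²)(V(x)W(x) + ζ₁x² + ζ₂x⁴)`. -/
theorem hpi19_scalar_identity (x : ℝ) :
    ∑ k ∈ Finset.range 19, x ^ k =
      1 + (x + x ^ 2) * (Vfn x * Wfn x + (3 / 8) * x ^ 2 + (321 / 1984) * x ^ 4) := by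
  have hs : (0:ℝ) ≤ 93 := by norm_num
  set s : ℝ := Real.sqrt 93 with hsdef
  set b : ℝ := Real.sqrt (27 - 2 * Real.sqrt 93) with hbdef
  have ha : s ^ 2 = 93 := Real.sq_sqrt hs
  have hsnn : 0 ≤ s := Real.sqrt_nonneg 93
  have h27 : (0:ℝ) ≤ 27 - 2 * Real.sqrt 93 := by nlinarith [ha, hsnn]
  have hb : b ^ 2 = 27 - 2 * s := Real.sq_sqrt h27
  simp only [Finset.sum_range_succ, Finset.sum_range_zero, Vfn, Wfn, Ufn, tau1, tau2, tau3, xi1, xi2, ← hsdef, ← hbdef]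
  linear_combination ((25/246016) * x^5 + (25/246016) * x^6 + (5/1984) * x^7 + (5/1984) * x^8 + (1/64) * x^9 + (1/64) * x^10) * ha + ((1/8) * x^5 + (1/8) * x^6 + (5/128) * x^7 + (5/128) * x^8 + (39/256) * x^9 + (-1/256) * x^9 * b^2 + (-1/128) * x^9 * s + (39/256) * x^10 + (-1/256) * x^10 * b^2 + (-1/128) * x^10 * s + (1/16) * x^11 + (1/16) * x^12 + (1/8) * x^13 + (1/8) * x^14) * hb
end
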